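/- arXiv:2012.10857 — 2 statements merged into one kernel-verified Lean document; each statement's English description precedes it below -/
import Mathlib

section
/- Let T, M > 0 and n ∈ ℕ. Let f : [0, 2T] → ℝ be a smooth (C^∞) function which has at least n distinct roots in [0, T] and whose n-th derivative satisfies ‖f^(n)‖_{L^∞[0,2T]} ≤ M. Then for every 0 ≤ k ≤ n, ‖f^(n−k)‖_{L^∞[T,2T]} ≤ M (2T)^k / k!. -/
open Set

private lemma rolle_finset (T : ℝ) (g : ℝ → ℝ) (hg : Differentiable ℝ g) :
    ∀ (m : ℕ) (s : Finset ℝ) (hcard : s.card = m + 1)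
      (hs : ∀ r ∈ s, r ∈ Icc (0:ℝ) T ∧ g r = 0),
    ∃ s' : Finset ℝ, s'.card = m ∧ ∀ r ∈ s', r ∈ Icc (0:ℝ) T ∧ deriv g r = 0 ∧
      s.min' (Finset.card_pos.mp (by omega)) < r ∧ r < s.max' (Finset.card_pos.mp (by omega)) := by
  intro m
  induction m with
  | zero => intro s hcard hs; exact ⟨∅, rfl, by simp⟩
  | succ k ih =>
    intro s hcard hs
    have hne : s.Nonempty := Finset.card_pos.mp (by omega)
    set a := s.min' hne with ha
    have hamem : a ∈ s := s.min'_mem hne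
    set s2 := s.erase a with hs2
    have hcard2 : s2.card = k + 1 := by
      rw [hs2, Finset.card_erase_of_mem hamem, hcard]; omega
    have hne2 : s2.Nonempty := Finset.card_pos.mp (by omega)
    set b := s2.min' hne2 with hb
    have hbmem2 : b ∈ s2 := s2.min'_mem hne2
    have hbmem : b ∈ s := Finset.mem_of_mem_erase hbmem2
    have hba : b ≠ a := Finset.ne_of_mem_erase hbmem2
    have hab : a < b := lt_of_le_of_ne (s.min'_le b hbmem) (Ne.symm hba)
    have haIcc := (hs a hamem).1
    have hbIcc := (hs b hbmem).1
    obtain ⟨c, hcmem, hc0⟩ := exists_deriv_eq_zero hab (hg.continuous.continuousOn)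
      ((hs a hamem).2.trans (hs b hbmem).2.symm)
    obtain ⟨s'', hcard'', hprop''⟩ := ih s2 hcard2 (fun r hr => hs r (Finset.mem_of_mem_erase hr))
    -- max' of s2 equals max' of s
    have hmax2 : s2.max' hne2 = s.max' hne := by
      apply le_antisymm
      · exact s.le_max' _ (Finset.mem_of_mem_erase (s2.max'_mem hne2))
      · apply s2.le_max'
        refine Finset.mem_erase.mpr ⟨?_, s.max'_mem hne⟩
        intro h
        have h1 : a < s.max' hne := lt_of_lt_of_le hab (s.le_max' b hbmem)
        rw [h] at h1; exact lt_irrefl _ h1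
    have hcnots : c ∉ s'' := by
      intro h
      have := (hprop'' c h).2.2.1
      have : b < c := lt_of_le_of_lt (le_refl _) this
      exact absurd hcmem.2 (not_lt.mpr this.le)
    refine ⟨insert c s'', ?_, ?_⟩
    · rw [Finset.card_insert_of_notMem hcnots, hcard'']
    · intro r hr
      rcases Finset.mem_insert.mp hr with rfl | hr
      · refine ⟨⟨le_trans haIcc.1 hcmem.1.le, le_trans hcmem.2.le hbIcc.2⟩, hc0, hcmem.1, ?_⟩
        calc r < b := hcmem.2
          _ ≤ s2.max' hne2 := s2.le_max' b hbmem2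
          _ = s.max' hne := hmax2
      · obtain ⟨hIcc, hd0, hlt1, hlt2⟩ := hprop'' r hr
        refine ⟨hIcc, hd0, lt_trans hab hlt1, ?_⟩
        rw [← hmax2]; exact hlt2

private lemma iter_rolle (T : ℝ) :
    ∀ (j m : ℕ) (g : ℝ → ℝ) (hg : ContDiff ℝ (⊤:ℕ∞) g) (s : Finset ℝ)
      (hcard : s.card = m + j) (hs : ∀ r ∈ s, r ∈ Icc (0:ℝ) T ∧ g r = 0),
    ∃ s' : Finset ℝ, s'.card = m ∧ ∀ r ∈ s', r ∈ Icc (0:ℝ) T ∧ iteratedDeriv j g r = 0 := by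
  intro j
  induction j with
  | zero =>
    intro m g hg s hcard hs
    exact ⟨s, by omega, fun r hr => by simpa [iteratedDeriv_zero] using hs r hr⟩
  | succ i ih =>
    intro m g hg s hcard hs
    obtain ⟨s1, hcard1, hs1⟩ := ih (m + 1) g hg s (by omega) hs
    have hdi : Differentiable ℝ (iteratedDeriv i g) := by
      rw [iteratedDeriv_eq_iterate]
      exact (ContDiff.iterate_deriv i hg).differentiable (by simp)
    obtain ⟨s', hcard', hs'⟩ := rolle_finset T (iteratedDeriv i g) hdi m s1 hcard1 hs1
    refine ⟨s', hcard', fun r hr => ⟨(hs' r hr).1, ?_⟩⟩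
    rw [iteratedDeriv_succ]
    exact (hs' r hr).2.1

private lemma keyA (T M : ℝ) (hT : 0 < T) (hM : 0 ≤ M) :
    ∀ (k : ℕ) (g : ℝ → ℝ) (hg : ContDiff ℝ (⊤:ℕ∞) g) (s : Finset ℝ) (hcard : s.card = k)
      (hs : ∀ r ∈ s, r ∈ Icc (0:ℝ) T ∧ g r = 0)
      (hb : ∀ x ∈ Icc (0:ℝ) (2*T), |iteratedDeriv k g x| ≤ M),
    ∀ x ∈ Icc (0:ℝ) (2*T), (∀ r ∈ s, r ≤ x) → |g x| ≤ M * x ^ k / (Nat.factorial k) := by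
  intro k
  induction k with
  | zero =>
    intro g hg s hcard hs hb x hx _
    simpa using hb x hx
  | succ k ih =>
    intro g hg s hcard hs hb x hx hxge
    have hne : s.Nonempty := Finset.card_pos.mp (by omega)
    set ξ := s.max' hne with hξ
    have hξmem : ξ ∈ s := s.max'_mem hne
    have hξIcc := (hs ξ hξmem).1
    have hξ0 := (hs ξ hξmem).2
    have hξx : ξ ≤ x := hxge ξ hξmem
    obtain ⟨s', hcard', hs'⟩ := rolle_finset T g (hg.differentiable (by simp)) k s hcard hs
    have hdg : ContDiff ℝ (⊤:ℕ∞) (deriv g) := by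
      have := ContDiff.iterate_deriv 1 hg
      rw [show ContDiff ℝ (↑(⊤:ℕ∞)) (deriv^[1] g) = ContDiff ℝ (↑(⊤:ℕ∞)) (deriv g) by
        rw [Function.iterate_one]] at this
      exact this
    have hderivbound : ∀ t ∈ Icc (0:ℝ) (2*T), (∀ r ∈ s', r ≤ t) →
        |deriv g t| ≤ M * t ^ k / (Nat.factorial k) := by
      apply ih (deriv g) hdg s' hcard' (fun r hr => ⟨(hs' r hr).1, (hs' r hr).2.1⟩)
      intro t ht
      have he : iteratedDeriv k (deriv g) = iteratedDeriv (k+1) g :=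
        (iteratedDeriv_succ' (n := k) (f := g)).symm
      rw [he]
      exact hb t ht
    have hξ02T : ξ ∈ Icc (0:ℝ) (2*T) := ⟨hξIcc.1, le_trans hξIcc.2 (by linarith)⟩
    have hbd : ∀ t ∈ Icc ξ x, |deriv g t| ≤ M * t ^ k / (Nat.factorial k) := by
      intro t ht
      apply hderivbound t ⟨le_trans hξIcc.1 ht.1, le_trans ht.2 hx.2⟩
      intro r hr
      exact le_trans ((hs' r hr).2.2.2).le (le_trans (le_refl ξ) ht.1)
    -- g x = ∫ deriv g from ξ to x
    have hcd : Continuous (deriv g) := hdg.continuous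
    have hint : ∫ t in ξ..x, deriv g t = g x - g ξ :=
      intervalIntegral.integral_deriv_eq_sub
        (fun t _ => (hg.differentiable (by simp)).differentiableAt)
        (hcd.intervalIntegrable ξ x)
    have habs : |g x| = |∫ t in ξ..x, deriv g t| := by rw [hint, hξ0, sub_zero]
    have h1 : |∫ t in ξ..x, deriv g t| ≤ ∫ t in ξ..x, |deriv g t| :=
      intervalIntegral.abs_integral_le_integral_abs hξx
    have h2 : ∫ t in ξ..x, |deriv g t| ≤ ∫ t in ξ..x, M * t ^ k / (Nat.factorial k) := by
      apply intervalIntegral.integral_mono_on hξx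
      · exact (hcd.abs.intervalIntegrable ξ x)
      · exact ((continuous_const.mul (continuous_pow k)).div_const _).intervalIntegrable ξ x
      · exact hbd
    have h3 : ∫ t in ξ..x, M * t ^ k / (Nat.factorial k)
        = (M / (Nat.factorial k)) * ((x ^ (k+1) - ξ ^ (k+1)) / (k + 1)) := by
      have : ∀ t : ℝ, M * t ^ k / (Nat.factorial k) = (M / (Nat.factorial k)) * t ^ k := by
        intro t; ring
      simp_rw [this]
      rw [intervalIntegral.integral_const_mul, integral_pow]
    have hx0 : 0 ≤ x := le_trans hξIcc.1 hξx
    have hξpow : 0 ≤ ξ ^ (k+1) := pow_nonneg hξIcc.1 _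
    have hfk : (0:ℝ) < Nat.factorial k := by positivity
    have hk1 : (0:ℝ) < (k:ℝ) + 1 := by positivity
    have hcast : ((Nat.factorial (k+1) : ℕ) : ℝ) = ((k:ℝ)+1) * (Nat.factorial k) := by
      rw [Nat.factorial_succ]; push_cast; ring
    have h4 : (M / (Nat.factorial k)) * ((x ^ (k+1) - ξ ^ (k+1)) / (k + 1))
        ≤ M * x ^ (k+1) / (Nat.factorial (k+1)) := by
      have hle : x ^ (k+1) - ξ ^ (k+1) ≤ x ^ (k+1) := by linarith
      calc (M / (Nat.factorial k)) * ((x ^ (k+1) - ξ ^ (k+1)) / ((k:ℝ) + 1))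
          = M * (x ^ (k+1) - ξ ^ (k+1)) / (((k:ℝ)+1) * (Nat.factorial k)) := by
            rw [div_mul_div_comm, mul_comm ((Nat.factorial k : ℝ)) ((k:ℝ)+1)]
        _ ≤ M * x ^ (k+1) / (((k:ℝ)+1) * (Nat.factorial k)) := by
            gcongr
        _ = M * x ^ (k+1) / (Nat.factorial (k+1)) := by rw [hcast]
    calc |g x| = |∫ t in ξ..x, deriv g t| := habs
      _ ≤ ∫ t in ξ..x, |deriv g t| := h1
      _ ≤ ∫ t in ξ..x, M * t ^ k / (Nat.factorial k) := h2
      _ = (M / (Nat.factorial k)) * ((x ^ (k+1) - ξ ^ (k+1)) / (k + 1)) := h3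
      _ ≤ M * x ^ (k+1) / (Nat.factorial (k+1)) := h4

theorem stmt_0 (T M : ℝ) (hT : 0 < T) (hM : 0 < M) (n : ℕ) (f : ℝ → ℝ)
    (hf : ContDiff ℝ (⊤ : ℕ∞) f)
    (roots : Finset ℝ) (hcard : roots.card = n)
    (hroots : ∀ x ∈ roots, x ∈ Icc 0 T ∧ f x = 0)
    (hbound : ∀ x ∈ Icc 0 (2 * T), |iteratedDeriv n f x| ≤ M) :
    ∀ k ≤ n, ∀ x ∈ Icc T (2 * T),
      |iteratedDeriv (n - k) f x| ≤ M * (2 * T) ^ k / (Nat.factorial k) := by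
  intro k hk x hx
  have hf' : ContDiff ℝ (⊤:ℕ∞) f := hf.of_le (by simp)
  obtain ⟨s', hcard', hs'⟩ := iter_rolle T (n - k) k f hf' roots (by omega) hroots
  have hg : ContDiff ℝ (⊤:ℕ∞) (iteratedDeriv (n - k) f) := by
    rw [iteratedDeriv_eq_iterate]
    exact ContDiff.iterate_deriv (n - k) hf'
  have hiter : iteratedDeriv k (iteratedDeriv (n - k) f) = iteratedDeriv n f := by
    simp only [iteratedDeriv_eq_iterate]
    rw [← Function.iterate_add_apply deriv k (n - k) f]
    congr 1
    omega
  have hb : ∀ y ∈ Icc (0:ℝ) (2*T), |iteratedDeriv k (iteratedDeriv (n - k) f) y| ≤ M := by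
    intro y hy; rw [hiter]; exact hbound y hy
  have hx02T : x ∈ Icc (0:ℝ) (2*T) := ⟨le_trans hT.le hx.1, hx.2⟩
  have hxge : ∀ r ∈ s', r ≤ x := fun r hr => le_trans (hs' r hr).1.2 hx.1
  have := keyA T M hT hM.le k (iteratedDeriv (n - k) f) hg s' hcard' hs' hb x hx02T hxge
  calc |iteratedDeriv (n - k) f x| ≤ M * x ^ k / (Nat.factorial k) := this
    _ ≤ M * (2 * T) ^ k / (Nat.factorial k) := by
        apply div_le_div_of_nonneg_right ?_ (by positivity)
        exact mul_le_mul_of_nonneg_left (pow_le_pow_left₀ hx02T.1 hx.2 k) hM.le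
end

section
/- Let T, M > 0 and n ∈ ℕ with 2T < n. Suppose f : [0, n] → ℝ is a smooth function such that ‖f^(n)‖_{L^∞[0,n]} ≤ M and ‖f‖_{L^∞[T,2T]} > M (2T)^n / n!. Then f has at most n − 1 distinct zeros in the interval [0, T]. -/
open Set Polynomial

/-- Iterated Rolle step: from `m+1` zeros of `g` produce `m` zeros of `deriv g`,
each strictly between two zeros of `g`. -/
lemma rolle_step (g : ℝ → ℝ) (hg : Continuous g) :
    ∀ (m : ℕ) (S : Finset ℝ), S.card = m + 1 → (∀ x ∈ S, g x = 0) →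
    ∃ T : Finset ℝ, T.card = m ∧ (∀ y ∈ T, deriv g y = 0) ∧
      ∀ y ∈ T, ∃ u ∈ S, ∃ v ∈ S, u < y ∧ y < v := by
  intro m
  induction m with
  | zero => exact fun S _ _ => ⟨∅, rfl, by simp, by simp⟩
  | succ m ih =>
    intro S hcard hzero
    have hne : S.Nonempty := Finset.card_pos.mp (by omega)
    set x := S.min' hne with hxdef
    have hxS : x ∈ S := S.min'_mem hne
    set S' := S.erase x with hS'def
    have hS'card : S'.card = m + 1 := by
      rw [hS'def, Finset.card_erase_of_mem hxS, hcard]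
      omega
    have hne' : S'.Nonempty := Finset.card_pos.mp (by omega)
    set y := S'.min' hne' with hydef
    have hyS' : y ∈ S' := S'.min'_mem hne'
    have hyS : y ∈ S := Finset.mem_of_mem_erase hyS'
    have hxy : x < y :=
      lt_of_le_of_ne (S.min'_le y hyS) (Ne.symm (Finset.ne_of_mem_erase hyS'))
    obtain ⟨c, hc, hc0⟩ := exists_deriv_eq_zero hxy hg.continuousOn
      ((hzero x hxS).trans (hzero y hyS).symm)
    obtain ⟨T', hT'card, hT'zero, hT'btw⟩ := ih S' hS'card
      (fun z hz => hzero z (Finset.mem_of_mem_erase hz))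
    have hcT' : c ∉ T' := by
      intro hcmem
      obtain ⟨u, hu, v, hv, huc, hcv⟩ := hT'btw c hcmem
      have hyu : y ≤ u := S'.min'_le u hu
      have := hc.2
      linarith
    refine ⟨insert c T', ?_, ?_, ?_⟩
    · rw [Finset.card_insert_of_notMem hcT', hT'card]
    · intro z hz
      rcases Finset.mem_insert.mp hz with h | h
      · exact h ▸ hc0
      · exact hT'zero z h
    · intro z hz
      rcases Finset.mem_insert.mp hz with h | h
      · exact ⟨x, hxS, y, hyS, h ▸ hc.1, h ▸ hc.2⟩
      · obtain ⟨u, hu, v, hv, h1, h2⟩ := hT'btw z h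
        exact ⟨u, Finset.mem_of_mem_erase hu, v, Finset.mem_of_mem_erase hv, h1, h2⟩

/-- Iterated Rolle: a smooth function with `k+1` zeros in `[a,b]` has a zero of its
`k`-th derivative in `[a,b]`. -/
lemma iterated_rolle :
    ∀ (k : ℕ) (g : ℝ → ℝ), ContDiff ℝ (⊤ : ℕ∞) g → ∀ (S : Finset ℝ) (a b : ℝ),
    S.card = k + 1 → (∀ x ∈ S, x ∈ Icc a b) → (∀ x ∈ S, g x = 0) →
    ∃ ξ ∈ Icc a b, iteratedDeriv k g ξ = 0 := by
  intro k
  induction k with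
  | zero =>
    intro g _ S a b hcard hmem hzero
    have hne : S.Nonempty := Finset.card_pos.mp (by omega)
    obtain ⟨x, hx⟩ := hne
    exact ⟨x, hmem x hx, by rw [iteratedDeriv_zero]; exact hzero x hx⟩
  | succ k ih =>
    intro g hg S a b hcard hmem hzero
    obtain ⟨T, hTcard, hTzero, hTbtw⟩ := rolle_step g hg.continuous (k + 1) S hcard hzero
    have hg' : ContDiff ℝ (⊤ : ℕ∞) (deriv g) := by
      have := (contDiff_succ_iff_deriv (n := (⊤ : ℕ∞))).mp
        (by rw [show (((⊤ : ℕ∞) : WithTop ℕ∞) + 1) = ((⊤ : ℕ∞) : WithTop ℕ∞) from rfl]; exact hg)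
      exact this.2.2
    have hTmem : ∀ x ∈ T, x ∈ Icc a b := by
      intro x hx
      obtain ⟨u, hu, v, hv, h1, h2⟩ := hTbtw x hx
      exact ⟨le_trans (hmem u hu).1 h1.le, le_trans h2.le (hmem v hv).2⟩
    obtain ⟨ξ, hξmem, hξ⟩ := ih (deriv g) hg' T a b hTcard hTmem hTzero
    exact ⟨ξ, hξmem, by rw [iteratedDeriv_succ']; exact hξ⟩

lemma contDiff_polyeval (p : ℝ[X]) : ContDiff ℝ (⊤ : ℕ∞) (fun x => p.eval x) := by
  induction p using Polynomial.induction_on' with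
  | add p q hp hq => simpa [Polynomial.eval_add] using hp.add hq
  | monomial n a =>
    simpa [Polynomial.eval_monomial] using (contDiff_const (c := a)).mul (contDiff_id.pow n)

lemma iteratedDeriv_polyeval (k : ℕ) (p : ℝ[X]) :
    iteratedDeriv k (fun x => p.eval x) = fun x => (derivative^[k] p).eval x := by
  induction k generalizing p with
  | zero => simp
  | succ k ih =>
    rw [iteratedDeriv_succ']
    have : deriv (fun x => p.eval x) = fun x => p.derivative.eval x := by
      funext x; exact p.deriv
    rw [this, ih, Function.iterate_succ_apply]

lemma iterated_deriv_monic (p : ℝ[X]) (n : ℕ) (hmonic : p.Monic) (hdeg : p.natDegree = n) :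
    derivative^[n] p = C (n.factorial : ℝ) := by
  have hd : (derivative^[n] p).natDegree ≤ 0 := by
    have := p.natDegree_iterate_derivative n
    omega
  rw [Polynomial.eq_C_of_natDegree_le_zero hd, Polynomial.coeff_iterate_derivative]
  rw [zero_add]
  rw [show p.coeff n = 1 from hdeg ▸ hmonic.coeff_natDegree]
  simp [Nat.descFactorial_self]

theorem stmt_3 (T M : ℝ) (hT : 0 < T) (hM : 0 < M) (n : ℕ) (h2T : 2 * T < n)
    (f : ℝ → ℝ) (hf : ContDiff ℝ (⊤ : ℕ∞) f)
    (hbound : ∀ x ∈ Icc (0:ℝ) n, |iteratedDeriv n f x| ≤ M)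
    (hbig : ∃ x ∈ Icc T (2 * T), |f x| > M * (2 * T) ^ n / (Nat.factorial n)) :
    ∀ S : Finset ℝ, (∀ x ∈ S, x ∈ Icc 0 T ∧ f x = 0) → S.card ≤ n - 1 := by
  intro S hS
  by_contra hcon
  push_neg at hcon
  have hn : 0 < n := by
    by_contra h
    push_neg at h
    interval_cases n <;> simp_all <;> linarith
  have hnS : n ≤ S.card := by omega
  obtain ⟨S₀, hS₀S, hS₀card⟩ := Finset.exists_subset_card_eq hnS
  obtain ⟨x₀, hx₀mem, hx₀big⟩ := hbig
  have hfac : (0:ℝ) < (Nat.factorial n : ℝ) := by positivity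
  have hTn : T < (n:ℝ) := by linarith
  have hbigpos : (0:ℝ) < M * (2 * T) ^ n / (Nat.factorial n) := by positivity
  have hfx₀ : f x₀ ≠ 0 := by
    intro h
    rw [h, abs_zero] at hx₀big
    linarith
  have hx₀notin : x₀ ∉ S₀ := fun h => hfx₀ ((hS x₀ (hS₀S h)).2)
  set P : ℝ := ∏ z ∈ S₀, (x₀ - z) with hPdef
  have hPne : P ≠ 0 := by
    rw [hPdef]
    apply Finset.prod_ne_zero_iff.mpr
    intro z hz
    exact sub_ne_zero.mpr (fun h => hx₀notin (h ▸ hz))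
  set c : ℝ := f x₀ / P with hcdef
  set Q : ℝ[X] := C c * ∏ z ∈ S₀, (X - C z) with hQdef
  have hQeval : ∀ x : ℝ, Q.eval x = c * ∏ z ∈ S₀, (x - z) := by
    intro x
    simp [hQdef, Polynomial.eval_prod]
  set g : ℝ → ℝ := fun x => f x - Q.eval x with hgdef
  have hgsmooth : ContDiff ℝ (⊤ : ℕ∞) g := hf.sub (contDiff_polyeval Q)
  -- zeros of g
  set S₁ := insert x₀ S₀ with hS₁def
  have hS₁card : S₁.card = n + 1 := by
    rw [hS₁def, Finset.card_insert_of_notMem hx₀notin, hS₀card]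
  have hS₁mem : ∀ x ∈ S₁, x ∈ Icc (0:ℝ) (n:ℝ) := by
    intro x hx
    rcases Finset.mem_insert.mp hx with h | h
    · subst h
      constructor
      · linarith [hx₀mem.1]
      · linarith [hx₀mem.2]
    · have := (hS x (hS₀S h)).1
      exact ⟨this.1, by linarith [this.2]⟩
  have hS₁zero : ∀ x ∈ S₁, g x = 0 := by
    intro x hx
    rcases Finset.mem_insert.mp hx with h | h
    · subst h
      simp only [hgdef, hQeval, hcdef]
      rw [← hPdef, div_mul_cancel₀ _ hPne, sub_self]
    · have hfz : f x = 0 := (hS x (hS₀S h)).2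
      simp only [hgdef, hQeval]
      rw [hfz, Finset.prod_eq_zero h (sub_self x), mul_zero, sub_zero]
  obtain ⟨ξ, hξmem, hξzero⟩ := iterated_rolle n g hgsmooth S₁ 0 n hS₁card hS₁mem hS₁zero
  -- compute the n-th derivative of g
  have hQmonic : (∏ z ∈ S₀, (X - C z) : ℝ[X]).Monic :=
    Polynomial.monic_prod_of_monic _ _ (fun z _ => Polynomial.monic_X_sub_C z)
  have hQdeg : (∏ z ∈ S₀, (X - C z) : ℝ[X]).natDegree = n := by
    rw [Polynomial.natDegree_prod_of_monic _ _ (fun z _ => Polynomial.monic_X_sub_C z)]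
    simp [hS₀card]
  have hQder : derivative^[n] Q = C (c * (Nat.factorial n : ℝ)) := by
    rw [hQdef, Polynomial.iterate_derivative_C_mul,
      iterated_deriv_monic _ n hQmonic hQdeg, ← Polynomial.C_mul]
  have hgderiv : iteratedDeriv n g ξ = iteratedDeriv n f ξ - c * (Nat.factorial n : ℝ) := by
    have hsub : iteratedDeriv n g ξ =
        iteratedDeriv n f ξ - iteratedDeriv n (fun x => Q.eval x) ξ := by
      have : g = (f - fun x => Q.eval x) := by funext x; simp [hgdef]
      rw [this, ← iteratedDerivWithin_univ, ← iteratedDerivWithin_univ,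
        ← iteratedDerivWithin_univ]
      exact iteratedDerivWithin_sub (mem_univ ξ) uniqueDiffOn_univ
        (hf.contDiffWithinAt.of_le (by exact_mod_cast le_top)) ((contDiff_polyeval Q).contDiffWithinAt.of_le (by exact_mod_cast le_top))
    rw [hsub, iteratedDeriv_polyeval, hQder]
    simp
  rw [hgderiv] at hξzero
  have hfn : iteratedDeriv n f ξ = c * (Nat.factorial n : ℝ) := by linarith
  have hcbound : |c| * (Nat.factorial n : ℝ) ≤ M := by
    have := hbound ξ hξmem
    rw [hfn, abs_mul, abs_of_pos hfac] at this
    exact this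
  -- bound on |P|
  have hPbound : |P| ≤ (2 * T) ^ n := by
    rw [hPdef, Finset.abs_prod]
    calc ∏ z ∈ S₀, |x₀ - z| ≤ ∏ z ∈ S₀, (2 * T) := by
          apply Finset.prod_le_prod
          · intro z _; exact abs_nonneg _
          · intro z hz
            have hz' := (hS z (hS₀S hz)).1
            rw [abs_le]
            constructor
            · linarith [hx₀mem.1, hz'.2]
            · linarith [hx₀mem.2, hz'.1]
      _ = (2 * T) ^ n := by rw [Finset.prod_const, hS₀card]
  -- final contradiction
  have hfx₀eq : |f x₀| = |c| * |P| := by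
    rw [hcdef, abs_div, div_mul_cancel₀ _ (abs_ne_zero.mpr hPne)]
  have : |f x₀| ≤ M * (2 * T) ^ n / (Nat.factorial n) := by
    rw [hfx₀eq]
    have h1 : |c| ≤ M / (Nat.factorial n : ℝ) := by
      rw [le_div_iff₀ hfac]; exact hcbound
    calc |c| * |P| ≤ (M / (Nat.factorial n : ℝ)) * (2 * T) ^ n := by
          apply mul_le_mul h1 hPbound (abs_nonneg _) (by positivity)
      _ = M * (2 * T) ^ n / (Nat.factorial n) := by ring
  linarith
end
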